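/- arXiv:2309.07004 — 4 statements merged into one kernel-verified Lean document; each statement's English description precedes it below -/
import Mathlib

section
/- Let q ∈ ℝ², ρ > 0 and s, t ∈ ℝ². Then the boundary integral of (t·n) against φ̌_s over the circle ∂B_ρ(q) with respect to arclength measure equals −πρ²(t·s), i.e. ∫_{∂B_ρ(q)} (t·n(x)) φ̌_s(x) dσ(x) = −π ρ² (t·s). -/
/-- The Euclidean dot product on `ℝ × ℝ`. -/
noncomputable def dot2 (a b : ℝ × ℝ) : ℝ := a.1 * b.1 + a.2 * b.2

/-- The two-dimensional exterior potential `φ̌_t(x) = -ρ² (t·(x−q))/|x−q|²`. -/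
noncomputable def phiCheck (q t : ℝ × ℝ) (ρ : ℝ) (x : ℝ × ℝ) : ℝ :=
  -ρ ^ 2 * dot2 t (x - q) / dot2 (x - q) (x - q)

/-- The boundary integral of `(t·n) φ̌_s` over `∂B_ρ(q)` with respect to arclength measure
(parametrized by `x(θ) = q + ρ(cos θ, sin θ)`, `dσ = ρ dθ`) equals `−πρ²(t·s)`. -/
theorem stmt1 (q : ℝ × ℝ) (ρ : ℝ) (hρ : 0 < ρ) (s t : ℝ × ℝ) :
    (∫ θ in (0 : ℝ)..(2 * Real.pi),
        dot2 t (Real.cos θ, Real.sin θ) *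
          phiCheck q s ρ (q + (ρ * Real.cos θ, ρ * Real.sin θ)) * ρ)
      = -Real.pi * ρ ^ 2 * dot2 t s := by
  have hρ' : ρ ≠ 0 := hρ.ne'
  have key : ∀ θ ∈ Set.uIcc (0:ℝ) (2*Real.pi),
      dot2 t (Real.cos θ, Real.sin θ) *
        phiCheck q s ρ (q + (ρ * Real.cos θ, ρ * Real.sin θ)) * ρ
      = (-ρ^2 * (t.1*s.1)) * (Real.cos θ)^2 + (-ρ^2 * (t.2*s.2)) * (Real.sin θ)^2
          + (-ρ^2 * (t.1*s.2 + t.2*s.1)) * (Real.sin θ * Real.cos θ) := by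
    intro θ _
    have h1 : Real.cos θ ^ 2 + Real.sin θ ^ 2 = 1 := Real.cos_sq_add_sin_sq θ
    simp only [phiCheck, dot2, Prod.fst_sub, Prod.snd_sub, Prod.fst_add, Prod.snd_add,
      Prod.mk.injEq]
    have hd : (q.1 + ρ * Real.cos θ - q.1) * (q.1 + ρ * Real.cos θ - q.1)
        + (q.2 + ρ * Real.sin θ - q.2) * (q.2 + ρ * Real.sin θ - q.2) = ρ^2 := by
      ring_nf; nlinarith [h1]
    rw [hd]
    field_simp
    ring
  rw [intervalIntegral.integral_congr key]
  have hi1 : IntervalIntegrable (fun θ => (-ρ^2 * (t.1*s.1)) * (Real.cos θ)^2)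
      MeasureTheory.volume 0 (2*Real.pi) := (by fun_prop : Continuous _).intervalIntegrable _ _
  have hi2 : IntervalIntegrable (fun θ => (-ρ^2 * (t.2*s.2)) * (Real.sin θ)^2)
      MeasureTheory.volume 0 (2*Real.pi) := (by fun_prop : Continuous _).intervalIntegrable _ _
  have hi3 : IntervalIntegrable (fun θ => (-ρ^2 * (t.1*s.2 + t.2*s.1)) * (Real.sin θ * Real.cos θ))
      MeasureTheory.volume 0 (2*Real.pi) := (by fun_prop : Continuous _).intervalIntegrable _ _
  rw [intervalIntegral.integral_add (hi1.add hi2) hi3, intervalIntegral.integral_add hi1 hi2,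
    intervalIntegral.integral_const_mul, intervalIntegral.integral_const_mul,
    intervalIntegral.integral_const_mul, integral_cos_sq, integral_sin_sq,
    integral_sin_mul_cos₁]
  simp [Real.sin_two_pi, Real.cos_two_pi, dot2]
  ring
end

section
/- For every s > 0, F(s) = (1 + s/2) ∫_0^{π/2} (1 + s/4 − sin²t)^{−1/2} dt − 2 ∫_0^{π/2} (1 + s/4 − sin²t)^{1/2} dt, where F(s) = ∫_0^π cos(t)/√(2(1 − cos t) + s) dt. -/
/-- For `s > 0`, the profile function
`F(s) = ∫_0^π cos t/√(2(1 − cos t) + s) dt` satisfies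
`F(s) = (1 + s/2) ∫_0^{π/2} (1 + s/4 − sin²t)^{−1/2} dt − 2 ∫_0^{π/2} (1 + s/4 − sin²t)^{1/2} dt`. -/
theorem stmt7 (s : ℝ) (hs : 0 < s) :
    (∫ t in (0 : ℝ)..Real.pi, Real.cos t / Real.sqrt (2 * (1 - Real.cos t) + s))
      = (1 + s / 2) *
          (∫ t in (0 : ℝ)..(Real.pi / 2), (Real.sqrt (1 + s / 4 - Real.sin t ^ 2))⁻¹)
        - 2 * ∫ t in (0 : ℝ)..(Real.pi / 2), Real.sqrt (1 + s / 4 - Real.sin t ^ 2) := by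
  have hA : ∀ u : ℝ, 0 < Real.sin u ^ 2 + s / 4 := fun u =>
    add_pos_of_nonneg_of_pos (sq_nonneg _) (by linarith)
  have hrpos : ∀ u : ℝ, 0 < Real.sqrt (Real.sin u ^ 2 + s / 4) := fun u =>
    Real.sqrt_pos.mpr (hA u)
  have hcont : Continuous fun u : ℝ => Real.sqrt (Real.sin u ^ 2 + s / 4) :=
    Real.continuous_sqrt.comp (by continuity)
  have hcont_inv : Continuous fun u : ℝ => (Real.sqrt (Real.sin u ^ 2 + s / 4))⁻¹ :=
    hcont.inv₀ fun u => (hrpos u).ne'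
  -- substitution t = 2u
  have hsub : (∫ t in (0 : ℝ)..Real.pi, Real.cos t / Real.sqrt (2 * (1 - Real.cos t) + s))
      = 2 * ∫ t in (0:ℝ)..(Real.pi/2),
          Real.cos (2*t) / Real.sqrt (2 * (1 - Real.cos (2*t)) + s) := by
    rw [intervalIntegral.integral_comp_mul_left
      (fun t => Real.cos t / Real.sqrt (2 * (1 - Real.cos t) + s)) (two_ne_zero)]
    rw [smul_eq_mul, show (2:ℝ)*0 = 0 by ring, show (2:ℝ)*(Real.pi/2) = Real.pi by ring]
    ring
  -- pointwise identity
  have key : ∀ t : ℝ, Real.cos (2*t) / Real.sqrt (2 * (1 - Real.cos (2*t)) + s)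
      = (1 + s/2)/2 * (Real.sqrt (Real.sin t ^ 2 + s/4))⁻¹
        - Real.sqrt (Real.sin t ^ 2 + s/4) := by
    intro t
    have hc : Real.cos (2*t) = 1 - 2 * Real.sin t ^ 2 := by
      rw [Real.cos_two_mul]; have := Real.sin_sq_add_cos_sq t; linarith
    have harg : 2 * (1 - Real.cos (2*t)) + s = 4 * (Real.sin t ^ 2 + s/4) := by
      rw [hc]; ring
    have hsq4 : Real.sqrt 4 = 2 := by
      rw [show (4:ℝ) = 2^2 by norm_num, Real.sqrt_sq (by norm_num : (0:ℝ) ≤ 2)]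
    have hsr : Real.sqrt (2 * (1 - Real.cos (2*t)) + s)
        = 2 * Real.sqrt (Real.sin t ^ 2 + s/4) := by
      rw [harg, Real.sqrt_mul (by norm_num), hsq4]
    set r := Real.sqrt (Real.sin t ^ 2 + s/4) with hr
    have hr2 : r^2 = Real.sin t ^ 2 + s/4 := Real.sq_sqrt (hA t).le
    rw [hsr, hc]
    have hrne : r ≠ 0 := (hrpos t).ne'
    field_simp
    linear_combination 4 * hr2
  have h1 : IntervalIntegrable (fun t : ℝ => (Real.sqrt (Real.sin t ^ 2 + s/4))⁻¹)
      MeasureTheory.volume 0 (Real.pi/2) := hcont_inv.intervalIntegrable _ _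
  have h2 : IntervalIntegrable (fun t : ℝ => Real.sqrt (Real.sin t ^ 2 + s/4))
      MeasureTheory.volume 0 (Real.pi/2) := hcont.intervalIntegrable _ _
  -- flip substitutions
  have hflip1 : (∫ t in (0:ℝ)..(Real.pi/2), (Real.sqrt (1 + s / 4 - Real.sin t ^ 2))⁻¹)
      = ∫ t in (0:ℝ)..(Real.pi/2), (Real.sqrt (Real.sin t ^ 2 + s/4))⁻¹ := by
    have h := intervalIntegral.integral_comp_sub_left
      (a := (0:ℝ)) (b := Real.pi/2)
      (fun u => (Real.sqrt (Real.sin u ^ 2 + s/4))⁻¹) (Real.pi/2)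
    simp only [sub_self, sub_zero] at h
    rw [← h]
    apply intervalIntegral.integral_congr
    intro t _
    have : 1 + s / 4 - Real.sin t ^ 2 = Real.sin (Real.pi/2 - t) ^ 2 + s/4 := by
      rw [Real.sin_pi_div_two_sub]
      have := Real.sin_sq_add_cos_sq t; linarith
    simp [this]
  have hflip2 : (∫ t in (0:ℝ)..(Real.pi/2), Real.sqrt (1 + s / 4 - Real.sin t ^ 2))
      = ∫ t in (0:ℝ)..(Real.pi/2), Real.sqrt (Real.sin t ^ 2 + s/4) := by
    have h := intervalIntegral.integral_comp_sub_left
      (a := (0:ℝ)) (b := Real.pi/2)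
      (fun u => Real.sqrt (Real.sin u ^ 2 + s/4)) (Real.pi/2)
    simp only [sub_self, sub_zero] at h
    rw [← h]
    apply intervalIntegral.integral_congr
    intro t _
    have : 1 + s / 4 - Real.sin t ^ 2 = Real.sin (Real.pi/2 - t) ^ 2 + s/4 := by
      rw [Real.sin_pi_div_two_sub]
      have := Real.sin_sq_add_cos_sq t; linarith
    simp [this]
  rw [hsub, hflip1, hflip2]
  rw [intervalIntegral.integral_congr (g := fun t =>
      (1 + s/2)/2 * (Real.sqrt (Real.sin t ^ 2 + s/4))⁻¹
        - Real.sqrt (Real.sin t ^ 2 + s/4)) (fun t _ => key t)]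
  rw [intervalIntegral.integral_sub ((h1.const_mul _)) h2,
    intervalIntegral.integral_const_mul]
  ring
end

section
/- For every s > 0, F(s) = (1 + s/2)(1 + s/4)^{−1/2} K_ell(2/√(4+s)) − 2 √(1 + s/4} · E_ell(2/√(4+s)), where F(s) = ∫_0^π cos(t)/√(2(1 − cos t) + s) dt, K_ell(m) = ∫_0^{π/2} (1 − m² sin²t)^{−1/2} dt and E_ell(m) = ∫_0^{π/2} (1 − m² sin²t)^{1/2} dt. (Note 2/√(4+s) = √(1 − s/(4+s)) ∈ (0,1) for s > 0.) -/
/-- The profile function of the fundamental solution of `div((1/r)∇·)`. -/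
noncomputable def Fprof (s : ℝ) : ℝ :=
  ∫ t in (0 : ℝ)..Real.pi, Real.cos t / Real.sqrt (2 * (1 - Real.cos t) + s)

/-- The complete elliptic integral of the first kind. -/
noncomputable def Kell (m : ℝ) : ℝ :=
  ∫ t in (0 : ℝ)..(Real.pi / 2), (Real.sqrt (1 - m ^ 2 * Real.sin t ^ 2))⁻¹

/-- The complete elliptic integral of the second kind. -/
noncomputable def Eell (m : ℝ) : ℝ :=
  ∫ t in (0 : ℝ)..(Real.pi / 2), Real.sqrt (1 - m ^ 2 * Real.sin t ^ 2)

/-- Representation of the profile function `F` in terms of complete elliptic integrals: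
`F(s) = (1 + s/2)(1 + s/4)^{−1/2} K_ell(2/√(4+s)) − 2 √(1 + s/4) E_ell(2/√(4+s))`. -/
theorem stmt8 (s : ℝ) (hs : 0 < s) :
    Fprof s
      = (1 + s / 2) * (Real.sqrt (1 + s / 4))⁻¹ * Kell (2 / Real.sqrt (4 + s))
        - 2 * Real.sqrt (1 + s / 4) * Eell (2 / Real.sqrt (4 + s)) := by
  have h4s : (0:ℝ) < 4 + s := by linarith
  set c := Real.sqrt (4 + s) with hc_def
  have hc : 0 < c := Real.sqrt_pos.mpr h4s
  have hc2 : c ^ 2 = 4 + s := Real.sq_sqrt h4s.le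
  set m := 2 / c with hm_def
  have hm2 : m ^ 2 = 4 / (4 + s) := by rw [hm_def, div_pow, hc2]; norm_num
  have hX : ∀ x : ℝ, 0 < 1 - m ^ 2 * Real.sin x ^ 2 := by
    intro x
    have h1 : Real.sin x ^ 2 ≤ 1 := Real.sin_sq_le_one x
    have hm1 : m ^ 2 < 1 := by rw [hm2, div_lt_one h4s]; linarith
    nlinarith [sq_nonneg m, sq_nonneg (Real.sin x)]
  set g : ℝ → ℝ := fun t => Real.cos t / Real.sqrt (2 * (1 - Real.cos t) + s) with hg_def
  -- Step A : substitution t = π - 2x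
  have hA : Fprof s = 2 * ∫ x in (0:ℝ)..(Real.pi/2), g (Real.pi - 2*x) := by
    have h1 : (∫ x in (0:ℝ)..(Real.pi/2), g (Real.pi - 2*x))
        = (2:ℝ)⁻¹ • ∫ y in (2*(0:ℝ))..(2*(Real.pi/2)), g (Real.pi - y) :=
      intervalIntegral.integral_comp_mul_left (fun y => g (Real.pi - y)) two_ne_zero
    have h2 : (∫ y in (0:ℝ)..Real.pi, g (Real.pi - y))
        = ∫ y in (Real.pi - Real.pi)..(Real.pi - 0), g y :=
      intervalIntegral.integral_comp_sub_left g Real.pi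
    rw [h1]
    rw [show 2*(0:ℝ) = 0 by ring, show 2*(Real.pi/2) = Real.pi by ring]
    rw [h2]
    simp [Fprof, hg_def]
  -- Step B : pointwise identity
  have key : ∀ x : ℝ, g (Real.pi - 2*x)
      = (2+s)/(2*c) * (Real.sqrt (1 - m^2 * Real.sin x^2))⁻¹
        - c/2 * Real.sqrt (1 - m^2 * Real.sin x^2) := by
    intro x
    have hXx := hX x
    have hsX : 0 < Real.sqrt (1 - m^2 * Real.sin x^2) := Real.sqrt_pos.mpr hXx
    have hcos : Real.cos (Real.pi - 2*x) = 2 * Real.sin x ^ 2 - 1 := by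
      rw [Real.cos_pi_sub, Real.cos_two_mul]
      nlinarith [Real.sin_sq_add_cos_sq x]
    have hin : 2 * (1 - Real.cos (Real.pi - 2*x)) + s
        = (4+s) * (1 - m^2 * Real.sin x^2) := by
      rw [hcos, hm2]; field_simp; ring
    have hsqrt : Real.sqrt (2 * (1 - Real.cos (Real.pi - 2*x)) + s)
        = c * Real.sqrt (1 - m^2 * Real.sin x^2) := by
      rw [hin, Real.sqrt_mul h4s.le]
    have hr2 : Real.sqrt (1 - m^2 * Real.sin x^2) ^ 2 = 1 - m^2 * Real.sin x^2 :=
      Real.sq_sqrt hXx.le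
    have hms : m^2 * (4+s) = 4 := by rw [hm2]; field_simp
    show Real.cos (Real.pi - 2*x) / Real.sqrt (2 * (1 - Real.cos (Real.pi - 2*x)) + s) = _
    rw [hsqrt, hcos]
    set r := Real.sqrt (1 - m^2 * Real.sin x^2) with hr_def
    have h2S : 2*Real.sin x^2 - 1 = (2+s)/2 - (4+s)/2 * r^2 := by
      linear_combination ((4+s)/2) * hr2 - (Real.sin x ^ 2 / 2) * hms
    rw [h2S, ← hc2]
    field_simp
  -- Step C : integrate
  have hcont2 : Continuous fun x : ℝ => Real.sqrt (1 - m^2 * Real.sin x^2) := by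
    fun_prop
  have hcont1 : Continuous fun x : ℝ => (Real.sqrt (1 - m^2 * Real.sin x^2))⁻¹ :=
    hcont2.inv₀ (fun x => (Real.sqrt_pos.mpr (hX x)).ne')
  have hint1 : IntervalIntegrable (fun x : ℝ => (2+s)/(2*c) * (Real.sqrt (1 - m^2 * Real.sin x^2))⁻¹)
      MeasureTheory.volume 0 (Real.pi/2) := ((continuous_const.mul hcont1).intervalIntegrable _ _)
  have hint2 : IntervalIntegrable (fun x : ℝ => c/2 * Real.sqrt (1 - m^2 * Real.sin x^2))
      MeasureTheory.volume 0 (Real.pi/2) := ((continuous_const.mul hcont2).intervalIntegrable _ _)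
  have hB : (∫ x in (0:ℝ)..(Real.pi/2), g (Real.pi - 2*x))
      = (2+s)/(2*c) * Kell m - c/2 * Eell m := by
    rw [intervalIntegral.integral_congr (g := fun x =>
        (2+s)/(2*c) * (Real.sqrt (1 - m^2 * Real.sin x^2))⁻¹
        - c/2 * Real.sqrt (1 - m^2 * Real.sin x^2)) (fun x _ => key x)]
    rw [intervalIntegral.integral_sub hint1 hint2,
      intervalIntegral.integral_const_mul, intervalIntegral.integral_const_mul]
    rfl
  have hhalf : Real.sqrt (1 + s/4) = c/2 := by
    rw [show (1 + s/4 : ℝ) = (c/2)^2 by rw [div_pow, hc2]; ring]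
    exact Real.sqrt_sq (by positivity)
  rw [hA, hB, hhalf]
  field_simp
end

section
/- There exist constants C > 0 and r ∈ (0,1) such that for all s ∈ (0, r): |F(s) + (1/2) log s − log 8 + 2| ≤ C s (1 + |log s|), where F(s) = ∫_0^π cos(t)/√(2(1 − cos t) + s) dt. In particular F(s) + (1/2) log s → log 8 − 2 as s → 0⁺. -/
open Real MeasureTheory intervalIntegral Set Filter

namespace Stmt12Aux

noncomputable def sq (s t : ℝ) : ℝ := Real.sqrt (4 * Real.sin (t/2)^2 + s)

lemma foursin (t : ℝ) : 4 * Real.sin (t/2)^2 = 2*(1 - Real.cos t) := by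
  have h := Real.cos_two_mul (t/2)
  have h2 : 2*(t/2) = t := by ring
  have h3 := Real.sin_sq_add_cos_sq (t/2)
  rw [h2] at h; nlinarith

lemma sq_pos {s : ℝ} (hs : 0 < s) (t : ℝ) : 0 < sq s t :=
  Real.sqrt_pos.2 (by positivity)

lemma sq_sq {s : ℝ} (hs : 0 ≤ s) (t : ℝ) : sq s t ^ 2 = 4 * Real.sin (t/2)^2 + s :=
  Real.sq_sqrt (by positivity)

lemma sq_ge {s : ℝ} (hs : 0 ≤ s) (t : ℝ) (ht : 0 ≤ Real.sin (t/2)) : 2 * Real.sin (t/2) ≤ sq s t := by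
  have h1 : Real.sqrt ((2*Real.sin (t/2))^2) ≤ sq s t :=
    Real.sqrt_le_sqrt (by nlinarith [Real.sqrt_nonneg (4 * Real.sin (t/2)^2 + s)])
  rwa [Real.sqrt_sq (by positivity)] at h1

lemma cont_sq (s : ℝ) : Continuous (sq s) := by
  unfold sq; fun_prop

lemma cont_inv_sq {s : ℝ} (hs : 0 < s) : Continuous (fun t => (sq s t)⁻¹) :=
  (cont_sq s).inv₀ (fun t => (sq_pos hs t).ne')

noncomputable def G (s : ℝ) : ℝ := ∫ t in (0:ℝ)..Real.pi, (sq s t)⁻¹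
noncomputable def G₂ (s : ℝ) : ℝ := ∫ t in (0:ℝ)..Real.pi, Real.cos (t/2) / sq s t
noncomputable def II (s : ℝ) : ℝ := ∫ t in (0:ℝ)..Real.pi, (1 - Real.cos (t/2)) / sq s t
noncomputable def HH (s : ℝ) : ℝ := ∫ t in (0:ℝ)..Real.pi, sq s t

lemma Fprof_eq {s : ℝ} (hs : 0 < s) :
    Fprof s = (1 + s/2) * G s - (1/2) * HH s := by
  have h1 : Fprof s = ∫ t in (0:ℝ)..Real.pi,
      ((1 + s/2) * (sq s t)⁻¹ - (1/2) * sq s t) := by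
    unfold Fprof
    apply intervalIntegral.integral_congr
    intro t _
    have h2 : 2 * (1 - Real.cos t) + s = 4 * Real.sin (t/2)^2 + s := by
      rw [foursin]
    show Real.cos t / Real.sqrt (2 * (1 - Real.cos t) + s) = _
    rw [h2]
    have hpos := sq_pos hs t
    have hsq := sq_sq hs.le t
    have hc : Real.cos t = 1 + s/2 - (4 * Real.sin (t/2)^2 + s)/2 := by
      nlinarith [foursin t]
    rw [hc, show Real.sqrt (4 * Real.sin (t/2)^2 + s) = sq s t from rfl, ← hsq]
    field_simp
  rw [h1, intervalIntegral.integral_sub, intervalIntegral.integral_const_mul,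
    intervalIntegral.integral_const_mul]
  · rfl
  · exact (continuous_const.mul (cont_inv_sq hs)).intervalIntegrable _ _
  · exact (continuous_const.mul (cont_sq s)).intervalIntegrable _ _


lemma cont_div_sq {s : ℝ} (hs : 0 < s) {f : ℝ → ℝ} (hf : Continuous f) :
    Continuous (fun t => f t / sq s t) :=
  hf.div (cont_sq s) (fun t => (sq_pos hs t).ne')

lemma G_split {s : ℝ} (hs : 0 < s) : G s = G₂ s + II s := by
  unfold G G₂ II
  rw [← intervalIntegral.integral_add]
  · apply intervalIntegral.integral_congr
    intro t _
    show (sq s t)⁻¹ = Real.cos (t/2) / sq s t + (1 - Real.cos (t/2)) / sq s t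
    rw [← add_div]
    norm_num
  · exact (cont_div_sq hs (by fun_prop)).intervalIntegrable _ _
  · exact (cont_div_sq hs (by fun_prop)).intervalIntegrable _ _


lemma hasDeriv_arsinh_comp {s : ℝ} (hs : 0 < s) (t : ℝ) :
    HasDerivAt (fun u => Real.arsinh (2 * Real.sin (u/2) / Real.sqrt s))
      (Real.cos (t/2) / sq s t) t := by
  have hc : (0:ℝ) < Real.sqrt s := Real.sqrt_pos.2 hs
  have h1 : HasDerivAt (fun u : ℝ => u/2) (1/2) t := (hasDerivAt_id t).div_const 2
  have h2 : HasDerivAt (fun u : ℝ => Real.sin (u/2)) (Real.cos (t/2) * (1/2)) t :=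
    HasDerivAt.comp (h₂ := Real.sin) t (Real.hasDerivAt_sin (t/2)) h1
  have h3 : HasDerivAt (fun u : ℝ => 2 * Real.sin (u/2) / Real.sqrt s)
      (2 * (Real.cos (t/2) * (1/2)) / Real.sqrt s) t :=
    (h2.const_mul 2).div_const _
  have h4 : HasDerivAt (fun u => Real.arsinh (2 * Real.sin (u/2) / Real.sqrt s)) _ t := HasDerivAt.comp (h₂ := Real.arsinh) t (Real.hasDerivAt_arsinh (2 * Real.sin (t/2) / Real.sqrt s)) h3
  convert h4 using 1
  have key : Real.sqrt (1 + (2 * Real.sin (t/2) / Real.sqrt s) ^ 2) * Real.sqrt s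
      = sq s t := by
    rw [← Real.sqrt_mul (by positivity) s]
    unfold sq
    congr 1
    have : Real.sqrt s ^ 2 = s := Real.sq_sqrt hs.le
    field_simp
    rw [this]; ring
  rw [← key]
  have hne : Real.sqrt (1 + (2 * Real.sin (t/2) / Real.sqrt s) ^ 2) ≠ 0 := by positivity
  field_simp

lemma G₂_eq {s : ℝ} (hs : 0 < s) :
    G₂ s = Real.log (2 + Real.sqrt (4 + s)) - (1/2) * Real.log s := by
  have hc : (0:ℝ) < Real.sqrt s := Real.sqrt_pos.2 hs
  have h1 : G₂ s = Real.arsinh (2 * Real.sin (Real.pi/2) / Real.sqrt s)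
      - Real.arsinh (2 * Real.sin ((0:ℝ)/2) / Real.sqrt s) := by
    unfold G₂
    exact intervalIntegral.integral_eq_sub_of_hasDerivAt
      (fun t _ => hasDeriv_arsinh_comp hs t)
      ((cont_div_sq hs (by fun_prop)).intervalIntegrable _ _)
  rw [h1]
  simp only [Real.sin_pi_div_two, zero_div, Real.sin_zero, mul_zero, mul_one, Real.arsinh_zero]
  rw [Real.arsinh, sub_zero]
  have h2 : (1 : ℝ) + (2 / Real.sqrt s) ^ 2 = (4 + s) / s := by
    have : Real.sqrt s ^ 2 = s := Real.sq_sqrt hs.le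
    field_simp
    linarith
  rw [h2]
  have h3 : Real.sqrt ((4 + s)/s) = Real.sqrt (4 + s) / Real.sqrt s :=
    Real.sqrt_div (by linarith) s
  rw [h3, ← add_div, Real.log_div (by positivity) hc.ne', Real.log_sqrt hs.le]
  ring


noncomputable def tq (t : ℝ) : ℝ := Real.sin (t/4) / (2 * Real.cos (t/4))

lemma cos_quarter_pos {t : ℝ} (h0 : 0 ≤ t) (h : t ≤ Real.pi) : 0 < Real.cos (t/4) := by
  apply Real.cos_pos_of_mem_Ioo
  constructor
  · nlinarith [Real.pi_pos]
  · nlinarith [Real.pi_pos]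

lemma contOn_tq : ContinuousOn tq (Icc 0 Real.pi) := by
  apply ContinuousOn.div (by fun_prop) (by fun_prop)
  intro t ht
  have := cos_quarter_pos ht.1 ht.2
  positivity

lemma uIcc_eq : uIcc (0:ℝ) Real.pi = Icc 0 Real.pi :=
  uIcc_of_le Real.pi_pos.le

lemma tq_int : ∫ t in (0:ℝ)..Real.pi, tq t = Real.log 2 := by
  have key : ∀ t ∈ uIcc (0:ℝ) Real.pi,
      HasDerivAt (fun u => -2 * Real.log (Real.cos (u/4))) (tq t) t := by
    intro t ht
    rw [uIcc_eq] at ht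
    have hco := cos_quarter_pos ht.1 ht.2
    have h1 : HasDerivAt (fun u : ℝ => u/4) (1/4) t := (hasDerivAt_id t).div_const 4
    have h2 : HasDerivAt (fun u : ℝ => Real.cos (u/4)) (-Real.sin (t/4) * (1/4)) t :=
      HasDerivAt.comp (h₂ := Real.cos) t (Real.hasDerivAt_cos (t/4)) h1
    have h3 : HasDerivAt (fun u => -2 * Real.log (Real.cos (u/4))) _ t := ((Real.hasDerivAt_log hco.ne').comp t h2).const_mul (-2 : ℝ)
    convert h3 using 1
    unfold tq
    field_simp
    ring
  rw [intervalIntegral.integral_eq_sub_of_hasDerivAt key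
    ((contOn_tq.mono (by rw [uIcc_eq])).intervalIntegrable)]
  rw [Real.cos_pi_div_four]
  norm_num
  rw [Real.log_div (by positivity) (by norm_num), Real.log_sqrt (by norm_num)]
  ring

lemma sin_int : ∫ t in (0:ℝ)..Real.pi, 2 * Real.sin (t/2) = 4 := by
  have key : ∀ t ∈ uIcc (0:ℝ) Real.pi,
      HasDerivAt (fun u => -4 * Real.cos (u/2)) (2 * Real.sin (t/2)) t := by
    intro t _
    have h1 : HasDerivAt (fun u : ℝ => u/2) (1/2) t := (hasDerivAt_id t).div_const 2
    have h2 : HasDerivAt (fun u : ℝ => Real.cos (u/2)) (-Real.sin (t/2) * (1/2)) t :=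
      HasDerivAt.comp (h₂ := Real.cos) t (Real.hasDerivAt_cos (t/2)) h1
    have h3 : HasDerivAt (fun u => -4 * Real.cos (u/2)) _ t := h2.const_mul (-4 : ℝ)
    convert h3 using 1
    ring
  rw [intervalIntegral.integral_eq_sub_of_hasDerivAt key
    ((by fun_prop : Continuous fun t : ℝ => 2 * Real.sin (t/2)).intervalIntegrable _ _)]
  rw [Real.cos_pi_div_two]
  norm_num

lemma sin_half_nonneg {t : ℝ} (h0 : 0 ≤ t) (h : t ≤ Real.pi) : 0 ≤ Real.sin (t/2) :=
  Real.sin_nonneg_of_nonneg_of_le_pi (by linarith) (by linarith [Real.pi_pos])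

lemma HH_sub {s : ℝ} (hs : 0 < s) :
    HH s - 4 = ∫ t in (0:ℝ)..Real.pi, (sq s t - 2 * Real.sin (t/2)) := by
  rw [intervalIntegral.integral_sub ((cont_sq s).intervalIntegrable _ _)
    ((by fun_prop : Continuous fun t : ℝ => 2 * Real.sin (t/2)).intervalIntegrable _ _),
    sin_int]
  rfl

lemma HH_lb {s : ℝ} (hs : 0 < s) : 0 ≤ HH s - 4 := by
  rw [HH_sub hs]
  apply intervalIntegral.integral_nonneg Real.pi_pos.le
  intro t ht
  have hw := sin_half_nonneg ht.1 ht.2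
  linarith [sq_ge hs.le t hw]

lemma HH_ub {s : ℝ} (hs : 0 < s) : HH s - 4 ≤ s * G s := by
  rw [HH_sub hs]
  have : s * G s = ∫ t in (0:ℝ)..Real.pi, s * (sq s t)⁻¹ :=
    (intervalIntegral.integral_const_mul s _).symm
  rw [this]
  apply intervalIntegral.integral_mono_on Real.pi_pos.le
    (((cont_sq s).sub (by fun_prop)).intervalIntegrable _ _)
    ((continuous_const.mul (cont_inv_sq hs)).intervalIntegrable _ _)
  intro t ht
  have hw := sin_half_nonneg ht.1 ht.2
  have hpos := sq_pos hs t
  have hge := sq_ge hs.le t hw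
  have hsq := sq_sq hs.le t
  simp only [Pi.sub_apply, Pi.mul_apply]
  rw [show s * (sq s t)⁻¹ = s / sq s t by ring, le_div_iff₀ hpos]
  nlinarith


noncomputable def dl (s t : ℝ) : ℝ := tq t - (1 - Real.cos (t/2)) / sq s t

lemma one_sub_cos_half (t : ℝ) : 1 - Real.cos (t/2) = 2 * Real.sin (t/4)^2 := by
  have h := Real.cos_two_mul (t/4)
  have h2 : 2*(t/4) = t/2 := by ring
  have h3 := Real.sin_sq_add_cos_sq (t/4)
  rw [h2] at h; nlinarith

lemma sin_half_eq (t : ℝ) : Real.sin (t/2) = 2 * Real.sin (t/4) * Real.cos (t/4) := by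
  have h := Real.sin_two_mul (t/4)
  have h2 : 2*(t/4) = t/2 := by ring
  rw [h2] at h; linarith

lemma tq_eq {t : ℝ} (h0 : 0 < t) (h : t ≤ Real.pi) :
    tq t = (1 - Real.cos (t/2)) / (2 * Real.sin (t/2)) := by
  have hsx : 0 < Real.sin (t/4) :=
    Real.sin_pos_of_pos_of_lt_pi (by linarith) (by nlinarith [Real.pi_pos])
  have hcx := cos_quarter_pos h0.le h
  rw [one_sub_cos_half, sin_half_eq]
  unfold tq
  field_simp

lemma dl_nonneg {s : ℝ} (hs : 0 < s) {t : ℝ} (h0 : 0 ≤ t) (h : t ≤ Real.pi) :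
    0 ≤ dl s t := by
  rcases eq_or_lt_of_le h0 with rfl | h0'
  · simp [dl, tq]
  · have hw : 0 < Real.sin (t/2) :=
      Real.sin_pos_of_pos_of_lt_pi (by linarith) (by nlinarith [Real.pi_pos])
    have hge := sq_ge hs.le t hw.le
    have hc : 0 ≤ 1 - Real.cos (t/2) := by linarith [Real.cos_le_one (t/2)]
    unfold dl
    rw [tq_eq h0' h, sub_nonneg]
    exact div_le_div_of_nonneg_left hc (by linarith) hge

lemma dl_le_left {s : ℝ} (hs : 0 < s) {t : ℝ} (h0 : 0 ≤ t) (h1 : t ≤ 1) :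
    dl s t ≤ t/4 := by
  have hpi := Real.pi_gt_three
  have hsx : Real.sin (t/4) ≤ t/4 := Real.sin_le (by linarith)
  have hsx0 : 0 ≤ Real.sin (t/4) :=
    Real.sin_nonneg_of_nonneg_of_le_pi (by linarith) (by linarith)
  have hcx : (1:ℝ)/2 ≤ Real.cos (t/4) := by
    have h3 : Real.cos (Real.pi/3) ≤ Real.cos (t/4) := by
      apply Real.cos_le_cos_of_nonneg_of_le_pi (by linarith) (by linarith) (by linarith)
    rwa [Real.cos_pi_div_three] at h3
  have htq : tq t ≤ t/4 := by
    unfold tq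
    calc Real.sin (t/4) / (2 * Real.cos (t/4)) ≤ Real.sin (t/4) / 1 :=
        div_le_div_of_nonneg_left hsx0 (by norm_num) (by linarith) |>.trans_eq rfl
      _ ≤ t/4 := by simpa using hsx
  have hnn : 0 ≤ (1 - Real.cos (t/2)) / sq s t := by
    apply div_nonneg _ (sq_pos hs t).le
    linarith [Real.cos_le_one (t/2)]
  unfold dl
  linarith

lemma dl_le_right {s : ℝ} (hs : 0 < s) {t : ℝ} (h0 : 0 < t) (h : t ≤ Real.pi) :
    dl s t ≤ s * Real.pi / (16 * t) := by
  have hpi := Real.pi_pos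
  set w := Real.sin (t/2) with hwdef
  have hw : 0 < w :=
    Real.sin_pos_of_pos_of_lt_pi (by linarith) (by nlinarith)
  have hq := sq_pos hs t
  have hge := sq_ge hs.le t hw.le
  have hsq := sq_sq hs.le t
  have hc : 0 ≤ 1 - Real.cos (t/2) := by linarith [Real.cos_le_one (t/2)]
  -- 1 - cos(t/2) ≤ w^2
  have hcw : 1 - Real.cos (t/2) ≤ w^2 := by
    have hx4 : Real.cos (Real.pi/4) ≤ Real.cos (t/4) := by
      apply Real.cos_le_cos_of_nonneg_of_le_pi (by linarith) (by linarith) (by linarith)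
    rw [Real.cos_pi_div_four] at hx4
    have h2 : Real.sqrt 2 ^ 2 = 2 := Real.sq_sqrt (by norm_num)
    have hsx0 : 0 ≤ Real.sin (t/4) :=
      Real.sin_nonneg_of_nonneg_of_le_pi (by linarith) (by linarith)
    rw [one_sub_cos_half, hwdef, sin_half_eq]
    have hcsq : (1:ℝ)/2 ≤ Real.cos (t/4)^2 := by nlinarith [Real.sqrt_nonneg 2]
    nlinarith [mul_nonneg (sq_nonneg (Real.sin (t/4))) (by linarith : (0:ℝ) ≤ 2*Real.cos (t/4)^2 - 1)]
  -- key: dl ≤ w^2 * (1/(2w) - 1/sq)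
  have hA : (0:ℝ) ≤ 1/(2*w) - 1/(sq s t) := by
    rw [sub_nonneg]
    exact one_div_le_one_div_of_le (by linarith) hge
  have hdl : dl s t ≤ w^2 * (1/(2*w) - 1/(sq s t)) := by
    unfold dl
    rw [tq_eq h0 h]
    have : (1 - Real.cos (t/2)) / (2*w) - (1 - Real.cos (t/2)) / sq s t
        = (1 - Real.cos (t/2)) * (1/(2*w) - 1/(sq s t)) := by
      field_simp
    rw [← hwdef, this]
    exact mul_le_mul_of_nonneg_right hcw hA
  -- w^2 * (1/(2w) - 1/sq) ≤ s/(16 w)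
  have hkey : w^2 * (1/(2*w) - 1/(sq s t)) ≤ s/(16*w) := by
    have hexp : w^2 * (1/(2*w) - 1/(sq s t)) = (w * sq s t - 2*w^2)/(2 * sq s t) := by
      field_simp
    rw [hexp, div_le_div_iff₀ (by positivity) (by positivity)]
    nlinarith [mul_nonneg (sub_nonneg.2 hge) (by nlinarith : (0:ℝ) ≤ (sq s t + 2*w) * sq s t - 8*w^2)]
  -- s/(16 w) ≤ s π/(16 t)
  have hwt : t / Real.pi ≤ w := by
    have := Real.mul_le_sin (x := t/2) (by linarith) (by linarith)
    rw [hwdef]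
    calc t / Real.pi = 2/Real.pi * (t/2) := by field_simp
      _ ≤ Real.sin (t/2) := this
  have hlast : s/(16*w) ≤ s * Real.pi / (16 * t) := by
    rw [div_le_div_iff₀ (by positivity) (by positivity)]
    calc s * (16 * t) = 16 * s * Real.pi * (t / Real.pi) := by field_simp
      _ ≤ 16 * s * Real.pi * w := by
          apply mul_le_mul_of_nonneg_left hwt (by positivity)
      _ = s * Real.pi * (16 * w) := by ring
  linarith


lemma contOn_dl {s : ℝ} (hs : 0 < s) : ContinuousOn (dl s) (Icc 0 Real.pi) := by
  unfold dl
  exact contOn_tq.sub (cont_div_sq hs (by fun_prop)).continuousOn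

lemma II_sub {s : ℝ} (hs : 0 < s) :
    Real.log 2 - II s = ∫ t in (0:ℝ)..Real.pi, dl s t := by
  rw [← tq_int]
  unfold II dl
  rw [intervalIntegral.integral_sub
    ((contOn_tq.mono (by rw [uIcc_eq])).intervalIntegrable)
    ((cont_div_sq hs (by fun_prop)).intervalIntegrable _ _)]

lemma II_nonneg {s : ℝ} (hs : 0 < s) : 0 ≤ II s := by
  apply intervalIntegral.integral_nonneg Real.pi_pos.le
  intro t ht
  apply div_nonneg _ (sq_pos hs t).le
  linarith [Real.cos_le_one (t/2)]

lemma II_le {s : ℝ} (hs : 0 < s) : II s ≤ Real.log 2 := by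
  have h : 0 ≤ Real.log 2 - II s := by
    rw [II_sub hs]
    apply intervalIntegral.integral_nonneg Real.pi_pos.le
    intro t ht
    exact dl_nonneg hs ht.1 ht.2
  linarith

lemma II_bound {s : ℝ} (hs0 : 0 < s) (hs1 : s < 1) :
    Real.log 2 - II s ≤ s/8 + s*Real.pi/16 * (Real.log Real.pi - Real.log (Real.sqrt s)) := by
  have hpi := Real.pi_gt_three
  set a := Real.sqrt s with hadef
  have ha : 0 < a := Real.sqrt_pos.2 hs0
  have ha1 : a ≤ 1 := by
    rw [hadef, show (1:ℝ) = Real.sqrt 1 by simp]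
    exact Real.sqrt_le_sqrt (by linarith)
  have hapi : a ≤ Real.pi := by linarith
  have hsub1 : uIcc (0:ℝ) a ⊆ Icc 0 Real.pi := by
    rw [uIcc_of_le ha.le]; exact Icc_subset_Icc le_rfl hapi
  have hsub2 : uIcc a Real.pi ⊆ Icc 0 Real.pi := by
    rw [uIcc_of_le hapi]; exact Icc_subset_Icc ha.le le_rfl
  have hint1 : IntervalIntegrable (dl s) volume 0 a :=
    ((contOn_dl hs0).mono hsub1).intervalIntegrable
  have hint2 : IntervalIntegrable (dl s) volume a Real.pi :=
    ((contOn_dl hs0).mono hsub2).intervalIntegrable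
  rw [II_sub hs0, ← intervalIntegral.integral_add_adjacent_intervals hint1 hint2]
  have hb1 : (∫ t in (0:ℝ)..a, dl s t) ≤ s/8 := by
    have h1 : (∫ t in (0:ℝ)..a, dl s t) ≤ ∫ t in (0:ℝ)..a, t/4 := by
      apply intervalIntegral.integral_mono_on ha.le hint1
        ((by fun_prop : Continuous fun t : ℝ => t/4).intervalIntegrable _ _)
      intro t ht
      exact dl_le_left hs0 ht.1 (ht.2.trans ha1)
    have h2 : (∫ t in (0:ℝ)..a, t/4) = s/8 := by
      rw [intervalIntegral.integral_div, integral_id, hadef, Real.sq_sqrt hs0.le]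
      ring
    linarith
  have hb2 : (∫ t in a..Real.pi, dl s t) ≤ s*Real.pi/16 * (Real.log Real.pi - Real.log a) := by
    have hcont : ContinuousOn (fun t : ℝ => s*Real.pi/(16*t)) (Icc a Real.pi) := by
      apply ContinuousOn.div continuousOn_const (by fun_prop)
      intro t ht
      have : 0 < t := lt_of_lt_of_le ha ht.1
      positivity
    have h1 : (∫ t in a..Real.pi, dl s t) ≤ ∫ t in a..Real.pi, s*Real.pi/(16*t) := by
      apply intervalIntegral.integral_mono_on hapi hint2
        ((hcont.mono (by rw [uIcc_of_le hapi])).intervalIntegrable)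
      intro t ht
      exact dl_le_right hs0 (lt_of_lt_of_le ha ht.1) ht.2
    have h2 : (∫ t in a..Real.pi, s*Real.pi/(16*t)) = s*Real.pi/16 * (Real.log Real.pi - Real.log a) := by
      have hexp : ∀ t : ℝ, s*Real.pi/(16*t) = s*Real.pi/16 * (1/t) := by
        intro t; field_simp
      simp_rw [hexp]
      rw [intervalIntegral.integral_const_mul, integral_one_div, Real.log_div (by linarith) ha.ne']
      rw [uIcc_of_le hapi]
      intro hmem
      exact absurd hmem.1 (by linarith)
    linarith
  linarith

lemma G_nonneg {s : ℝ} (hs : 0 < s) : 0 ≤ G s := by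
  apply intervalIntegral.integral_nonneg Real.pi_pos.le
  intro t ht
  exact inv_nonneg.2 (Real.sqrt_nonneg _)

lemma abs_log_eq {s : ℝ} (hs0 : 0 < s) (hs1 : s < 1) : |Real.log s| = -Real.log s :=
  abs_of_neg (Real.log_neg hs0 hs1)

lemma G_ub {s : ℝ} (hs0 : 0 < s) (hs1 : s < 1) : G s ≤ 5 + |Real.log s| := by
  rw [G_split hs0, G₂_eq hs0]
  have h1 : Real.sqrt (4+s) ≤ 3 := by
    rw [show (3:ℝ) = Real.sqrt 9 by
      rw [show (9:ℝ) = 3^2 by norm_num, Real.sqrt_sq (by norm_num)]]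
    exact Real.sqrt_le_sqrt (by linarith)
  have h2 : Real.log (2 + Real.sqrt (4+s)) ≤ 4 := by
    calc Real.log (2 + Real.sqrt (4+s)) ≤ (2 + Real.sqrt (4+s)) - 1 :=
        Real.log_le_sub_one_of_pos (by positivity)
      _ ≤ 4 := by linarith
  have h3 : Real.log 2 ≤ 1 := by linarith [Real.log_le_sub_one_of_pos (by norm_num : (0:ℝ) < 2)]
  have h4 := II_le hs0
  rw [abs_log_eq hs0 hs1]
  have h5 : -(1/2 : ℝ) * Real.log s ≤ -Real.log s := by
    nlinarith [Real.log_neg hs0 hs1]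
  linarith


lemma sqrt4s_ge {s : ℝ} (hs : 0 ≤ s) : 2 ≤ Real.sqrt (4 + s) := by
  rw [show (2:ℝ) = Real.sqrt 4 by
    rw [show (4:ℝ) = 2^2 by norm_num, Real.sqrt_sq (by norm_num)]]
  exact Real.sqrt_le_sqrt (by linarith)

lemma sqrt4s_le {s : ℝ} (hs : 0 ≤ s) : Real.sqrt (4 + s) ≤ 2 + s/4 := by
  rw [show 2 + s/4 = Real.sqrt ((2 + s/4)^2) from (Real.sqrt_sq (by linarith)).symm]
  exact Real.sqrt_le_sqrt (by nlinarith)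

lemma key {s : ℝ} (hs0 : 0 < s) (hs1 : s < 1/2) :
    |Fprof s + (1/2)*Real.log s - Real.log 8 + 2| ≤ 10 * s * (1 + |Real.log s|) := by
  have hs1' : s < 1 := by linarith
  set l := |Real.log s| with hldef
  have hl : 0 ≤ l := abs_nonneg _
  have hle : Real.log s = -l := by rw [hldef, abs_log_eq hs0 hs1']; ring
  have hE : Fprof s + (1/2)*Real.log s - Real.log 8 + 2
      = (Real.log (2 + Real.sqrt (4+s)) - Real.log 4) - (Real.log 2 - II s)
        + (s/2) * G s - (HH s - 4)/2 := by
    have h8 : Real.log 8 = Real.log 4 + Real.log 2 := by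
      rw [← Real.log_mul (by norm_num) (by norm_num)]; norm_num
    rw [Fprof_eq hs0, h8, G_split hs0, G₂_eq hs0]
    ring
  -- term bounds
  have hA1a : Real.log 4 ≤ Real.log (2 + Real.sqrt (4+s)) := by
    apply Real.log_le_log (by norm_num)
    linarith [sqrt4s_ge hs0.le]
  have hA1b : Real.log (2 + Real.sqrt (4+s)) - Real.log 4 ≤ s/16 := by
    rw [← Real.log_div (by positivity) (by norm_num)]
    have := Real.log_le_sub_one_of_pos
      (show (0:ℝ) < (2 + Real.sqrt (4+s))/4 by positivity)
    have h2 := sqrt4s_le hs0.le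
    linarith [this]
  have hA2a : 0 ≤ Real.log 2 - II s := by linarith [II_le hs0]
  have hA2b : Real.log 2 - II s ≤ s * (1 + l) := by
    have hb := II_bound hs0 hs1'
    have hlogpi : Real.log Real.pi ≤ Real.pi - 1 :=
      Real.log_le_sub_one_of_pos Real.pi_pos
    have hlogsqrt : Real.log (Real.sqrt s) = -(l/2) := by
      rw [Real.log_sqrt hs0.le, hle]; ring
    rw [hlogsqrt] at hb
    have hpi1 : Real.pi < 3.15 := Real.pi_lt_d2
    have hpi2 : 3 < Real.pi := Real.pi_gt_three
    have hlogpi' : 0 < Real.log Real.pi := Real.log_pos (by linarith)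
    nlinarith [mul_nonneg hs0.le hl, mul_pos hs0 (by linarith : (0:ℝ) < Real.pi)]
  have hG0 := G_nonneg hs0
  have hGu := G_ub hs0 hs1'
  have hA3a : 0 ≤ (s/2) * G s := by positivity
  have hA3b : (s/2) * G s ≤ 3 * (s * (1 + l)) := by nlinarith
  have hA4a : 0 ≤ (HH s - 4)/2 := by linarith [HH_lb hs0]
  have hA4b : (HH s - 4)/2 ≤ 3 * (s * (1 + l)) := by
    have := HH_ub hs0
    nlinarith
  have hsl : 0 ≤ s * (1 + l) := by positivity
  rw [hE, abs_le]
  constructor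
  · nlinarith
  · nlinarith

end Stmt12Aux

/-- There are `C > 0` and `r ∈ (0,1)` such that for all `s ∈ (0,r)`,
`|F(s) + (1/2) log s − log 8 + 2| ≤ C s (1 + |log s|)`; in particular
`F(s) + (1/2) log s → log 8 − 2` as `s → 0⁺`. -/
theorem stmt12 :
    (∃ C > (0 : ℝ), ∃ r ∈ Set.Ioo (0 : ℝ) 1, ∀ s ∈ Set.Ioo (0 : ℝ) r,
      |Fprof s + (1 / 2) * Real.log s - Real.log 8 + 2| ≤ C * s * (1 + |Real.log s|)) ∧
    Filter.Tendsto (fun s => Fprof s + (1 / 2) * Real.log s)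
      (nhdsWithin 0 (Set.Ioi 0)) (nhds (Real.log 8 - 2)) := by
  constructor
  · exact ⟨10, by norm_num, 1/2, ⟨by norm_num, by norm_num⟩,
      fun s hs => Stmt12Aux.key hs.1 hs.2⟩
  · have hmem : Set.Ioo (0:ℝ) (1/2) ∈ nhdsWithin (0:ℝ) (Set.Ioi 0) :=
      Ioo_mem_nhdsGT_of_mem ⟨le_refl (0:ℝ), by norm_num⟩
    have hg : Filter.Tendsto (fun s : ℝ => 10 * s * (1 + |Real.log s|))
        (nhdsWithin 0 (Set.Ioi 0)) (nhds 0) := by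
      have h1 : Filter.Tendsto (fun s : ℝ => Real.log s * s ^ (1:ℝ))
          (nhdsWithin 0 (Set.Ioi 0)) (nhds 0) :=
        tendsto_log_mul_rpow_nhdsGT_zero one_pos
      have h2 : Filter.Tendsto (fun s : ℝ => |Real.log s * s ^ (1:ℝ)|)
          (nhdsWithin 0 (Set.Ioi 0)) (nhds 0) := by
        have := h1.abs
        simpa using this
      have h3 : Filter.Tendsto (fun s : ℝ => s * |Real.log s|)
          (nhdsWithin 0 (Set.Ioi 0)) (nhds 0) := by
        apply h2.congr'
        filter_upwards [self_mem_nhdsWithin] with s hs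
        have hs' : (0:ℝ) < s := hs
        rw [Real.rpow_one, abs_mul, abs_of_pos hs', mul_comm]
      have h4 : Filter.Tendsto (fun s : ℝ => s) (nhdsWithin (0:ℝ) (Set.Ioi 0)) (nhds 0) :=
        Filter.tendsto_id.mono_left nhdsWithin_le_nhds |>.congr (fun _ => rfl)
      have h5 := (h4.add h3).const_mul (10:ℝ)
      simp only [add_zero, mul_zero] at h5
      apply h5.congr
      intro s
      ring
    rw [show Real.log 8 - 2 = Real.log 8 - 2 from rfl]
    rw [← tendsto_sub_nhds_zero_iff]
    apply squeeze_zero_norm' _ hg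
    filter_upwards [hmem] with s hs
    have := Stmt12Aux.key hs.1 hs.2
    rw [Real.norm_eq_abs]
    calc |Fprof s + 1/2 * Real.log s - (Real.log 8 - 2)|
        = |Fprof s + 1/2 * Real.log s - Real.log 8 + 2| := by ring_nf
      _ ≤ 10 * s * (1 + |Real.log s|) := this
end
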